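/- Suppose the volume (measure) of a metric ball in a space satisfies μ(d_c² ≤ x) = c x^{t/2}(1 + O(x)) as x → 0, with density (t/2) c x^{t/2-1}(1+O(x)). Then the m-fold convolution satisfies μ^{(m)}(d_c² ≤ x) = (Γ(t/2+1)^m / Γ(mt/2+1)) c^m x^{mt/2} (1 + O(x)) as x → 0. -/

import Mathlib

open MeasureTheory Real Set

/-- The `m`-fold additive convolution power of a measure on `ℝ`
(`ν^{*0}` is the Dirac mass at `0`). -/
noncomputable def convPow (ν : MeasureTheory.Measure ℝ) : ℕ → MeasureTheory.Measure ℝ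
  | 0 => MeasureTheory.Measure.dirac 0
  | m + 1 => MeasureTheory.Measure.conv (convPow ν m) ν

/-!
Induction on `m`, with `s = t/2` and `A_m = convPowConst s c m`. All convolution powers of `ν`
live on `[0, ∞)`, so `ν^{*(m+1)}([0,x]) = ∫₀ˣ f(v) ν^{*m}([0,x-v]) dv`. Inserting
`f(v) = s c v^{s-1} + O(v^s)` and `ν^{*m}([0,u]) = A_m u^{ms} + O(u^{ms+1})`, the main term is the
Beta integral `∫₀ˣ v^{s-1} (x-v)^{ms} dv = B(s, ms+1) x^{(m+1)s}`, the error is `O(x)` times the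
same integral, and `s Γ(s) = Γ(s+1)` turns `s c A_m B(s, ms+1)` into `A_{m+1}`.
-/

open ProbabilityTheory

lemma integral_rpow_mul_one_sub_rpow {a b : ℝ} (ha : 0 < a) (hb : 0 < b) :
    ∫ y in (0:ℝ)..1, y ^ (a - 1) * (1 - y) ^ (b - 1) = beta a b := by
  have hcomplex : ((∫ y in (0:ℝ)..1, y ^ (a - 1) * (1 - y) ^ (b - 1) : ℝ) : ℂ)
      = Complex.betaIntegral a b := by
    rw [Complex.betaIntegral, ← intervalIntegral.integral_ofReal]
    refine intervalIntegral.integral_congr fun y hy => ?_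
    rw [uIcc_of_le zero_le_one] at hy
    simp only [Complex.ofReal_mul, Complex.ofReal_cpow hy.1,
      Complex.ofReal_cpow (sub_nonneg.2 hy.2)]
    push_cast
    ring
  rw [beta_eq_betaIntegralReal a b ha hb, ← hcomplex, Complex.ofReal_re]

lemma integral_rpow_mul_sub_rpow {a b x : ℝ} (ha : 0 < a) (hb : 0 < b) (hx : 0 < x) :
    ∫ v in (0:ℝ)..x, v ^ (a - 1) * (x - v) ^ (b - 1) = beta a b * x ^ (a + b - 1) := by
  have hscale : ∀ y ∈ uIcc (0:ℝ) 1, (x * y) ^ (a - 1) * (x - x * y) ^ (b - 1)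
      = x ^ (a + b - 2) * (y ^ (a - 1) * (1 - y) ^ (b - 1)) := by
    intro y hy
    rw [uIcc_of_le zero_le_one] at hy
    rw [← mul_one_sub, mul_rpow hx.le hy.1, mul_rpow hx.le (sub_nonneg.2 hy.2),
      show a + b - 2 = (a - 1) + (b - 1) by ring, rpow_add hx]
    ring
  have hsubst := intervalIntegral.smul_integral_comp_mul_left (a := 0) (b := 1)
    (fun v => v ^ (a - 1) * (x - v) ^ (b - 1)) x
  rw [mul_zero, mul_one] at hsubst
  rw [← hsubst, intervalIntegral.integral_congr hscale, intervalIntegral.integral_const_mul,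
    integral_rpow_mul_one_sub_rpow ha hb, smul_eq_mul, show a + b - 1 = 1 + (a + b - 2) by ring,
    rpow_add hx, rpow_one]
  ring

lemma intervalIntegrable_rpow_mul_sub_rpow {a r x : ℝ} (ha : 0 < a) (hr : 0 ≤ r) :
    IntervalIntegrable (fun v => v ^ (a - 1) * (x - v) ^ r) volume 0 x :=
  (intervalIntegral.intervalIntegrable_rpow' (by linarith)).mul_continuousOn
    ((continuous_const.sub continuous_id).rpow_const fun _ => Or.inr hr).continuousOn

lemma intervalIntegrable_of_abs_sub_rpow_le {f : ℝ → ℝ} {a s C x : ℝ} (hs : 0 < s)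
    (hf : Measurable f) (hx : 0 ≤ x)
    (hbound : ∀ v ∈ Ioc 0 x, |f v - a * v ^ (s - 1)| ≤ C * v ^ s) :
    IntervalIntegrable f volume 0 x := by
  have hmajorant : IntervalIntegrable (fun v => |a| * v ^ (s - 1) + C * v ^ s) volume 0 x :=
    ((intervalIntegral.intervalIntegrable_rpow' (by linarith)).const_mul _).add
      ((intervalIntegral.intervalIntegrable_rpow' (by linarith)).const_mul _)
  refine hmajorant.mono_fun' hf.aestronglyMeasurable.restrict ?_
  rw [uIoc_of_le hx, Filter.EventuallyLE, ae_restrict_iff' measurableSet_Ioc]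
  refine Filter.Eventually.of_forall fun v hv => ?_
  have hv0 : 0 ≤ v ^ (s - 1) := rpow_nonneg hv.1.le _
  calc ‖f v‖ ≤ |a * v ^ (s - 1)| + |f v - a * v ^ (s - 1)| := by
        rw [Real.norm_eq_abs]; linarith [abs_sub_abs_le_abs_sub (f v) (a * v ^ (s - 1))]
    _ ≤ |a| * v ^ (s - 1) + C * v ^ s := by
        rw [abs_mul, abs_of_nonneg hv0]; gcongr; exact hbound v hv

lemma abs_mul_sub_mul_rpow_le {φ Φ a A s r C D x v u : ℝ} (hr : 0 ≤ r) (hC : 0 ≤ C)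
    (hD : 0 ≤ D) (hv : v ∈ Ioc 0 x) (hu : u ∈ Icc 0 x) (hx1 : x ≤ 1)
    (hφ : |φ - a * v ^ (s - 1)| ≤ C * v ^ s) (hΦ : |Φ - A * u ^ r| ≤ D * u ^ (r + 1)) :
    |φ * Φ - a * A * (v ^ (s - 1) * u ^ r)|
      ≤ (C * (|A| + D) + |a| * D) * x * (v ^ (s - 1) * u ^ r) := by
  obtain ⟨hv0, hvx⟩ := hv
  obtain ⟨hu0, hux⟩ := hu
  have hvs : 0 ≤ v ^ (s - 1) := rpow_nonneg hv0.le _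
  have hur : 0 ≤ u ^ r := rpow_nonneg hu0 _
  have hv_pow : v ^ s ≤ x * v ^ (s - 1) := by
    rw [show s = (s - 1) + 1 by ring, rpow_add_one hv0.ne', add_sub_cancel_right, mul_comm]
    exact mul_le_mul_of_nonneg_right hvx hvs
  have hu_pow : u ^ (r + 1) ≤ x * u ^ r := by
    rw [rpow_add_one' hu0 (by linarith), mul_comm]
    exact mul_le_mul_of_nonneg_right hux hur
  have hΦ_le : |Φ| ≤ (|A| + D) * u ^ r := by
    have hu_pow_le : u ^ (r + 1) ≤ u ^ r :=
      rpow_le_rpow_of_exponent_ge' hu0 (hux.trans hx1) hr (by linarith)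
    calc |Φ| ≤ |A * u ^ r| + |Φ - A * u ^ r| := by
          linarith [abs_sub_abs_le_abs_sub Φ (A * u ^ r)]
      _ ≤ |A| * u ^ r + D * u ^ r := by
          rw [abs_mul, abs_of_nonneg hur]; gcongr; exact hΦ.trans (by gcongr)
      _ = (|A| + D) * u ^ r := by ring
  calc |φ * Φ - a * A * (v ^ (s - 1) * u ^ r)|
      = |(φ - a * v ^ (s - 1)) * Φ + a * v ^ (s - 1) * (Φ - A * u ^ r)| := by ring_nf
    _ ≤ C * v ^ s * ((|A| + D) * u ^ r) + |a| * v ^ (s - 1) * (D * u ^ (r + 1)) := by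
        refine (abs_add_le _ _).trans ?_
        rw [abs_mul, abs_mul, abs_mul, abs_of_nonneg hvs]
        gcongr
    _ ≤ C * (x * v ^ (s - 1)) * ((|A| + D) * u ^ r)
          + |a| * v ^ (s - 1) * (D * (x * u ^ r)) := by gcongr
    _ = (C * (|A| + D) + |a| * D) * x * (v ^ (s - 1) * u ^ r) := by ring

lemma abs_integral_mul_comp_sub_sub_le {f F : ℝ → ℝ} {a A s r C D x : ℝ} (hs : 0 < s)
    (hr : 0 ≤ r) (hC : 0 ≤ C) (hD : 0 ≤ D) (hx : 0 ≤ x) (hx1 : x ≤ 1)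
    (hf : ∀ v ∈ Ioc 0 x, |f v - a * v ^ (s - 1)| ≤ C * v ^ s)
    (hF : ∀ u ∈ Icc 0 x, |F u - A * u ^ r| ≤ D * u ^ (r + 1))
    (hint : IntervalIntegrable (fun v => f v * F (x - v)) volume 0 x) :
    |(∫ v in (0:ℝ)..x, f v * F (x - v)) - a * A * beta s (r + 1) * x ^ (s + r)|
      ≤ (C * (|A| + D) + |a| * D) * beta s (r + 1) * x ^ (s + r + 1) := by
  rcases hx.eq_or_lt with rfl | hx
  · simp [zero_rpow (by positivity : s + r ≠ 0), zero_rpow (by positivity : s + r + 1 ≠ 0)]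
  set K := C * (|A| + D) + |a| * D
  have hbeta : ∫ v in (0:ℝ)..x, v ^ (s - 1) * (x - v) ^ r = beta s (r + 1) * x ^ (s + r) := by
    have := integral_rpow_mul_sub_rpow (b := r + 1) hs (by positivity) hx
    rwa [add_sub_cancel_right, ← add_assoc, add_sub_cancel_right] at this
  have hkernel := intervalIntegrable_rpow_mul_sub_rpow (x := x) hs hr
  have hmodel : ∫ v in (0:ℝ)..x, a * A * (v ^ (s - 1) * (x - v) ^ r)
      = a * A * beta s (r + 1) * x ^ (s + r) := by
    rw [intervalIntegral.integral_const_mul, hbeta, mul_assoc (a * A)]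
  have herror : ∫ v in (0:ℝ)..x, K * x * (v ^ (s - 1) * (x - v) ^ r)
      = K * beta s (r + 1) * x ^ (s + r + 1) := by
    rw [intervalIntegral.integral_const_mul, hbeta, rpow_add_one hx.ne']
    ring
  rw [← hmodel, ← herror, ← intervalIntegral.integral_sub hint (hkernel.const_mul _),
    ← Real.norm_eq_abs]
  refine intervalIntegral.norm_integral_le_of_norm_le hx.le
    (Filter.Eventually.of_forall fun v hv => ?_) (hkernel.const_mul _)
  exact abs_mul_sub_mul_rpow_le hr hC hD hv ⟨by linarith [hv.2], by linarith [hv.1]⟩ hx1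
    (hf v hv) (hF (x - v) ⟨by linarith [hv.2], by linarith [hv.1]⟩)

lemma measure_Icc_of_nonpos {μ : Measure ℝ} (hμ : μ (Iio 0) = 0) {a : ℝ} (ha : a ≤ 0) (b : ℝ) :
    μ (Icc a b) = μ (Icc 0 b) := by
  rw [← measure_sdiff_null (s := Icc a b) hμ]
  congr 1
  ext u
  simp only [mem_sdiff, mem_Icc, mem_Iio, not_lt]
  constructor
  · rintro ⟨⟨-, hub⟩, hu⟩
    exact ⟨hu, hub⟩
  · rintro ⟨hu, hub⟩
    exact ⟨⟨ha.trans hu, hub⟩, hu⟩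

lemma conv_Iio_eq_zero {μ ν : Measure ℝ} [SFinite ν] (hμ : μ (Iio 0) = 0)
    (hν : ν (Iio 0) = 0) : (μ ∗ ν) (Iio 0) = 0 := by
  rw [Measure.conv, Measure.map_apply measurable_add measurableSet_Iio,
    Measure.prod_apply (measurable_add measurableSet_Iio)]
  refine lintegral_eq_zero_of_ae_eq_zero ?_
  filter_upwards [measure_eq_zero_iff_ae_notMem.mp hμ] with u hu
  refine measure_mono_null (fun v hv => ?_) hν
  simp only [mem_preimage, mem_Iio, not_lt] at hu hv ⊢
  linarith

instance sFinite_convPow (ν : Measure ℝ) [SFinite ν] (m : ℕ) : SFinite (convPow ν m) := by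
  induction m with
  | zero => exact inferInstanceAs (SFinite (Measure.dirac _))
  | succ m ih => exact inferInstanceAs (SFinite (convPow ν m ∗ ν))

lemma convPow_Iio_eq_zero {ν : Measure ℝ} [SFinite ν] (hν : ν (Iio 0) = 0) (m : ℕ) :
    convPow ν m (Iio 0) = 0 := by
  induction m with
  | zero => simp [convPow]
  | succ m ih => exact conv_Iio_eq_zero ih hν

lemma withDensity_ofReal_Iio_eq_zero {f : ℝ → ℝ} (hsupp : ∀ x < 0, f x = 0) :
    volume.withDensity (fun x => ENNReal.ofReal (f x)) (Iio 0) = 0 := by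
  rw [withDensity_apply _ measurableSet_Iio]
  exact setLIntegral_eq_zero measurableSet_Iio fun x hx => by simp [hsupp x hx]

lemma conv_withDensity_apply_Icc {μ : Measure ℝ} [SFinite μ] (hμ : μ (Iio 0) = 0)
    {f : ℝ → ℝ} (hf : Measurable f) (hsupp : ∀ x < 0, f x = 0) (x : ℝ) :
    (μ ∗ volume.withDensity (fun v => ENNReal.ofReal (f v))) (Icc 0 x)
      = ∫⁻ v in Icc 0 x, ENNReal.ofReal (f v) * μ (Icc 0 (x - v)) := by
  have hfibre : ∀ v, ENNReal.ofReal (f v)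
      * μ ((fun u => (u, v)) ⁻¹' ((fun p : ℝ × ℝ => p.1 + p.2) ⁻¹' Icc 0 x))
      = ENNReal.ofReal (f v) * μ (Icc 0 (x - v)) := by
    intro v
    rcases lt_or_ge v 0 with hv | hv
    · simp [hsupp v hv]
    have hpre : (fun u => (u, v)) ⁻¹' ((fun p : ℝ × ℝ => p.1 + p.2) ⁻¹' Icc 0 x)
        = Icc (-v) (x - v) := by
      ext u
      simp only [mem_preimage, mem_Icc]
      constructor <;> rintro ⟨h1, h2⟩ <;> constructor <;> linarith
    rw [hpre, measure_Icc_of_nonpos hμ (by linarith)]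
  have hsupport :
      Function.support (fun v => ENNReal.ofReal (f v) * μ (Icc 0 (x - v))) ⊆ Icc 0 x := by
    intro v hv
    by_contra hvx
    rcases not_and_or.mp hvx with hv0 | hvx
    · exact hv (by simp [hsupp v (not_le.mp hv0)])
    · exact hv (by simp [Icc_eq_empty (by linarith [not_le.mp hvx] : ¬ (0:ℝ) ≤ x - v)])
  rw [Measure.conv, Measure.map_apply measurable_add measurableSet_Icc,
    Measure.prod_apply_symm (measurable_add measurableSet_Icc),
    lintegral_withDensity_eq_lintegral_mul_non_measurable _ hf.ennreal_ofReal
      (Filter.Eventually.of_forall fun _ => ENNReal.ofReal_lt_top)]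
  simp only [Pi.mul_apply, hfibre]
  exact (setLIntegral_eq_of_support_subset hsupport).symm

lemma intervalIntegrable_mul_measure_Icc_sub {μ : Measure ℝ} {f : ℝ → ℝ} {x : ℝ} (hx : 0 ≤ x)
    (hμx : μ (Icc 0 x) ≠ ⊤) (hf : IntervalIntegrable f volume 0 x) (hf0 : ∀ v, 0 ≤ f v) :
    IntervalIntegrable (fun v => f v * (μ (Icc 0 (x - v))).toReal) volume 0 x := by
  have hanti : Antitone fun v => μ (Icc 0 (x - v)) := fun v w hvw =>
    measure_mono (Icc_subset_Icc_right (by linarith))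
  refine (hf.mul_const (μ (Icc 0 x)).toReal).mono_fun'
    (hf.def'.aestronglyMeasurable.mul
      (ENNReal.measurable_toReal.comp hanti.measurable).aestronglyMeasurable.restrict) ?_
  rw [uIoc_of_le hx, Filter.EventuallyLE, ae_restrict_iff' measurableSet_Ioc]
  refine Filter.Eventually.of_forall fun v hv => ?_
  rw [Real.norm_eq_abs, abs_of_nonneg (mul_nonneg (hf0 v) ENNReal.toReal_nonneg)]
  gcongr
  · exact hf0 v
  · linarith [hv.1]

lemma conv_withDensity_apply_Icc_eq_ofReal {μ : Measure ℝ} [SFinite μ] (hμ : μ (Iio 0) = 0)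
    {f : ℝ → ℝ} (hf : Measurable f) (hf0 : ∀ v, 0 ≤ f v) (hsupp : ∀ x < 0, f x = 0) {x : ℝ}
    (hx : 0 ≤ x) (hμx : μ (Icc 0 x) ≠ ⊤) (hfx : IntervalIntegrable f volume 0 x) :
    (μ ∗ volume.withDensity (fun v => ENNReal.ofReal (f v))) (Icc 0 x)
      = ENNReal.ofReal (∫ v in (0:ℝ)..x, f v * (μ (Icc 0 (x - v))).toReal) := by
  have hfinite : ∀ v ∈ Icc 0 x, μ (Icc 0 (x - v)) ≠ ⊤ := fun v hv =>
    ne_top_of_le_ne_top hμx (measure_mono (Icc_subset_Icc_right (by linarith [hv.1])))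
  rw [conv_withDensity_apply_Icc hμ hf hsupp, intervalIntegral.integral_of_le hx,
    ← integral_Icc_eq_integral_Ioc, ofReal_integral_eq_lintegral_ofReal]
  · refine setLIntegral_congr_fun measurableSet_Icc fun v hv => ?_
    rw [ENNReal.ofReal_mul (hf0 v), ENNReal.ofReal_toReal (hfinite v hv)]
  · exact (intervalIntegrable_iff_integrableOn_Icc_of_le hx).mp
      (intervalIntegrable_mul_measure_Icc_sub hx hμx hfx hf0)
  · exact Filter.Eventually.of_forall fun v => mul_nonneg (hf0 v) ENNReal.toReal_nonneg

noncomputable def convPowConst (s c : ℝ) (m : ℕ) : ℝ :=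
  Gamma (s + 1) ^ m / Gamma (m * s + 1) * c ^ m

lemma convPowConst_succ {s : ℝ} (hs : 0 < s) (c : ℝ) (m : ℕ) :
    convPowConst s c (m + 1) = s * c * convPowConst s c m * beta s (m * s + 1) := by
  have hGamma : Gamma (m * s + 1) ≠ 0 := (Gamma_pos_of_pos (by positivity)).ne'
  rw [convPowConst, convPowConst, beta, Gamma_add_one hs.ne', Nat.cast_succ,
    show s + (m * s + 1) = (m + 1) * s + 1 by ring]
  field_simp
  ring

theorem convPow_withDensity_Icc_asymptotics {s c δ C : ℝ} (hs : 0 < s) (hδ : δ ≤ 1)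
    (hC : 0 ≤ C) {f : ℝ → ℝ} (hf : Measurable f) (hf0 : ∀ x, 0 ≤ f x)
    (hsupp : ∀ x < 0, f x = 0)
    (hasymp : ∀ x ∈ Ioo 0 δ, |f x - s * c * x ^ (s - 1)| ≤ C * x ^ s) (m : ℕ) :
    ∃ D, 0 ≤ D ∧ ∀ x ∈ Ico 0 δ,
      convPow (volume.withDensity fun v => ENNReal.ofReal (f v)) m (Icc 0 x) ≠ ⊤ ∧
      |(convPow (volume.withDensity fun v => ENNReal.ofReal (f v)) m (Icc 0 x)).toReal
        - convPowConst s c m * x ^ (m * s)| ≤ D * x ^ (m * s + 1) := by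
  induction m with
  | zero =>
    refine ⟨0, le_rfl, fun x hx => ?_⟩
    simp [convPow, convPowConst, hx.1]
  | succ m ih =>
    obtain ⟨D, hD, hm⟩ := ih
    refine ⟨(C * (|convPowConst s c m| + D) + |s * c| * D) * beta s (m * s + 1),
      by have := beta_pos hs (by positivity : 0 < (m : ℝ) * s + 1); positivity,
      fun x hx => ?_⟩
    have hf_on : ∀ v ∈ Ioc 0 x, |f v - s * c * v ^ (s - 1)| ≤ C * v ^ s :=
      fun v hv => hasymp v ⟨hv.1, hv.2.trans_lt hx.2⟩
    have hf_int := intervalIntegrable_of_abs_sub_rpow_le hs hf hx.1 hf_on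
    have hconv := conv_withDensity_apply_Icc_eq_ofReal
      (convPow_Iio_eq_zero (withDensity_ofReal_Iio_eq_zero hsupp) m) hf hf0 hsupp hx.1 (hm x hx).1
      hf_int
    refine ⟨by rw [convPow, hconv]; exact ENNReal.ofReal_ne_top, ?_⟩
    rw [convPow, hconv, ENNReal.toReal_ofReal (intervalIntegral.integral_nonneg hx.1
      fun v _ => mul_nonneg (hf0 v) ENNReal.toReal_nonneg), convPowConst_succ hs, Nat.cast_succ,
      show ((m : ℝ) + 1) * s = s + m * s by ring]
    exact abs_integral_mul_comp_sub_sub_le hs (by positivity) hC hD hx.1 (hx.2.le.trans hδ)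
      hf_on (fun u hu => (hm u ⟨hu.1, hu.2.trans_lt hx.2⟩).2)
      (intervalIntegrable_mul_measure_Icc_sub hx.1 (hm x hx).1 hf_int hf0)

theorem convPow_small_ball_volume_general (t c : ℝ) (ht : 0 < t)
    (f : ℝ → ℝ) (hfmeas : Measurable f) (hf0 : ∀ x, 0 ≤ f x)
    (hsupp : ∀ x < (0:ℝ), f x = 0)
    (hasymp : ∃ δ > (0:ℝ), ∃ C : ℝ, ∀ x ∈ Set.Ioo (0:ℝ) δ,
      |f x - (t / 2) * c * x ^ (t / 2 - 1)| ≤ C * x ^ (t / 2))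
    (ν : MeasureTheory.Measure ℝ)
    (hν : ν = MeasureTheory.volume.withDensity (fun x => ENNReal.ofReal (f x)))
    (m : ℕ) :
    ∃ δ' > (0:ℝ), ∃ C' : ℝ, ∀ x ∈ Set.Ioo (0:ℝ) δ',
      |((convPow ν m) (Set.Icc 0 x)).toReal -
          (Real.Gamma (t / 2 + 1)) ^ m / Real.Gamma ((m : ℝ) * t / 2 + 1) *
            c ^ m * x ^ ((m : ℝ) * t / 2)|
        ≤ C' * x ^ ((m : ℝ) * t / 2 + 1) := by
  obtain ⟨δ, hδ, C, hC⟩ := hasymp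
  have hasymp' : ∀ x ∈ Ioo 0 (min δ 1),
      |f x - t / 2 * c * x ^ (t / 2 - 1)| ≤ max C 0 * x ^ (t / 2) := fun x hx =>
    (hC x ⟨hx.1, hx.2.trans_le (min_le_left _ _)⟩).trans
      (mul_le_mul_of_nonneg_right (le_max_left C 0) (rpow_nonneg hx.1.le _))
  obtain ⟨D, -, hD⟩ := convPow_withDensity_Icc_asymptotics (half_pos ht) (min_le_right δ 1)
    (le_max_right C 0) hfmeas hf0 hsupp hasymp' m
  refine ⟨min δ 1, lt_min hδ one_pos, D, fun x hx => ?_⟩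
  simpa only [hν, convPowConst, mul_div_assoc] using (hD x ⟨hx.1.le, hx.2⟩).2

/-- Suppose a measure `ν` on `[0,∞)` has density `f` with
`f(x) = (t/2) c x^{t/2-1}(1+O(x))` as `x → 0⁺` (so that
`ν(d_c² ≤ x) = c x^{t/2}(1+O(x))`). Then its `m`-fold convolution satisfies
`ν^{*m}([0,x]) = (Γ(t/2+1)^m / Γ(mt/2+1)) c^m x^{mt/2}(1 + O(x))` as `x → 0⁺`. -/
theorem convPow_small_ball_volume (t c : ℝ) (ht : 0 < t) (hc : 0 < c)
    (f : ℝ → ℝ) (hfmeas : Measurable f) (hf0 : ∀ x, 0 ≤ f x)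
    (hsupp : ∀ x < (0:ℝ), f x = 0)
    (hasymp : ∃ δ > (0:ℝ), ∃ C : ℝ, ∀ x ∈ Set.Ioo (0:ℝ) δ,
      |f x - (t / 2) * c * x ^ (t / 2 - 1)| ≤ C * x ^ (t / 2))
    (ν : MeasureTheory.Measure ℝ)
    (hν : ν = MeasureTheory.volume.withDensity (fun x => ENNReal.ofReal (f x)))
    (m : ℕ) (hm : 1 ≤ m) :
    ∃ δ' > (0:ℝ), ∃ C' : ℝ, ∀ x ∈ Set.Ioo (0:ℝ) δ',
      |((convPow ν m) (Set.Icc 0 x)).toReal -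
          (Real.Gamma (t / 2 + 1)) ^ m / Real.Gamma ((m : ℝ) * t / 2 + 1) *
            c ^ m * x ^ ((m : ℝ) * t / 2)|
        ≤ C' * x ^ ((m : ℝ) * t / 2 + 1) :=
  convPow_small_ball_volume_general t c ht f hfmeas hf0 hsupp hasymp ν hν m
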